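/- arXiv:1509.09167 — 4 statements merged into one kernel-verified Lean document; each statement's English description precedes it below -/
import Mathlib

section
/- Let a > 0, b < 0, c > 0, and let X ~ Gamma(a/2, −b/2). Then E[X/(X+c)] = 1 − ψ_c, where ψ_c = (−bc/2)^{a/2} e^{−bc/2} Γ(1−a/2, −bc/2). -/
open Real Set

/-- Upper incomplete gamma function `Γ(α, y) = ∫_y^∞ e^{−t} t^{α−1} dt`. -/
noncomputable def uiGamma (α y : ℝ) : ℝ := ∫ t in Set.Ioi y, Real.exp (-t) * t ^ (α - 1)

/-- Density of the Gamma(a/2, −b/2) distribution at `x`. -/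
noncomputable def gDens (a b x : ℝ) : ℝ :=
  (Real.Gamma (a / 2))⁻¹ * (-b / 2) ^ (a / 2) * x ^ (a / 2 - 1) * Real.exp (b * x / 2)

/-- `ψ_c = (−bc/2)^{a/2} e^{−bc/2} Γ(1−a/2, −bc/2)`. -/
noncomputable def psi (a b c : ℝ) : ℝ :=
  (-(b * c) / 2) ^ (a / 2) * Real.exp (-(b * c) / 2) * uiGamma (1 - a / 2) (-(b * c) / 2)
/-!
Since `1 / (x + c) = ∫₀^∞ e^{-(x+c)u} du`, Fubini turns `∫₀^∞ x^{s-1} e^{-lx} / (x + c) dx` into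
`∫₀^∞ e^{-cu} ∫₀^∞ x^{s-1} e^{-(l+u)x} dx du = Γ(s) ∫₀^∞ e^{-cu} (l + u)^{-s} du`, and the
substitution `t = c (l + u)` identifies the last integral with `c^{s-1} e^{cl} Γ(1-s, cl)`.
With `s = a/2`, `l = -b/2` this gives `c E[1/(X+c)] = ψ_c`, and `X/(X+c) = 1 - c/(X+c)`.
-/

open MeasureTheory

theorem integral_comp_add_right_Ioi {E : Type*} [NormedAddCommGroup E] [NormedSpace ℝ E]
    (g : ℝ → E) (a d : ℝ) :
    ∫ x in Ioi a, g (x + d) = ∫ x in Ioi (a + d), g x := by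
  rw [← integral_indicator measurableSet_Ioi, ← integral_indicator measurableSet_Ioi,
    ← integral_add_right_eq_self (fun x => (Ioi (a + d)).indicator g x) d]
  simp only [indicator_apply, mem_Ioi, add_lt_add_iff_right]

theorem integral_exp_neg_mul_Ioi_zero {r : ℝ} (hr : 0 < r) :
    ∫ u in Ioi (0 : ℝ), exp (-(r * u)) = r⁻¹ := by
  simpa [neg_mul] using integral_exp_mul_Ioi (neg_neg_of_pos hr) 0

theorem integrableOn_rpow_mul_exp_neg_mul_Ioi {s r : ℝ} (hs : 0 < s) (hr : 0 < r) :
    IntegrableOn (fun x => x ^ (s - 1) * exp (-(r * x))) (Ioi 0) := by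
  simpa [neg_mul] using
    integrableOn_rpow_mul_exp_neg_mul_rpow (s := s - 1) (by linarith) one_pos hr

theorem integrableOn_div_add_const_Ioi {f : ℝ → ℝ} {c : ℝ} (hf : IntegrableOn f (Ioi 0))
    (hc : 0 < c) : IntegrableOn (fun x => f x / (x + c)) (Ioi 0) := by
  refine Integrable.mul_bdd (c := c⁻¹) hf (by fun_prop) ?_
  filter_upwards [ae_restrict_mem measurableSet_Ioi] with x (hx : 0 < x)
  rw [norm_inv, Real.norm_of_nonneg (by positivity)]
  exact inv_anti₀ hc (by linarith)

theorem integral_div_add_eq_integral_exp_mul_laplace {f : ℝ → ℝ} {c : ℝ}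
    (hf : IntegrableOn f (Ioi 0)) (hc : 0 < c) :
    ∫ x in Ioi 0, f x / (x + c) =
      ∫ u in Ioi 0, exp (-(c * u)) * ∫ x in Ioi 0, f x * exp (-(u * x)) := by
  set F : ℝ → ℝ → ℝ := fun x u => f x * exp (-((x + c) * u))
  have integral_exp_kernel : ∀ x ∈ Ioi (0 : ℝ), ∀ y : ℝ,
      ∫ u in Ioi 0, y * exp (-((x + c) * u)) = y / (x + c) := fun x (hx : 0 < x) y => by
    rw [integral_const_mul, integral_exp_neg_mul_Ioi_zero (by linarith), div_eq_mul_inv]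
  have hF : Integrable (Function.uncurry F)
      ((volume.restrict (Ioi 0)).prod (volume.restrict (Ioi 0))) := by
    have hmeas : AEStronglyMeasurable (Function.uncurry F)
        ((volume.restrict (Ioi 0)).prod (volume.restrict (Ioi 0))) :=
      hf.aestronglyMeasurable.comp_fst.mul (by fun_prop : Continuous fun p : ℝ × ℝ =>
        exp (-((p.1 + c) * p.2))).aestronglyMeasurable
    refine (integrable_prod_iff hmeas).2 ⟨?_, ?_⟩
    · filter_upwards [ae_restrict_mem measurableSet_Ioi] with x (hx : 0 < x)
      refine ((exp_neg_integrableOn_Ioi 0 (by linarith : 0 < x + c)).const_mul (f x)).congr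
        (ae_of_all _ fun u => ?_)
      simp only [F, Function.uncurry_apply_pair, neg_mul]
    · refine (integrableOn_div_add_const_Ioi hf.norm hc).congr ?_
      filter_upwards [ae_restrict_mem measurableSet_Ioi] with x hx
      simp only [F, Function.uncurry_apply_pair, norm_mul, Real.norm_of_nonneg (exp_pos _).le]
      exact (integral_exp_kernel x hx ‖f x‖).symm
  calc ∫ x in Ioi 0, f x / (x + c) = ∫ x in Ioi 0, ∫ u in Ioi 0, F x u :=
        setIntegral_congr_fun measurableSet_Ioi fun x hx => (integral_exp_kernel x hx (f x)).symm
    _ = ∫ u in Ioi 0, ∫ x in Ioi 0, F x u := integral_integral_swap hF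
    _ = _ := setIntegral_congr_fun measurableSet_Ioi fun u _ => by
        rw [← integral_const_mul]
        congr 1 with x
        simp only [F]
        rw [mul_left_comm, ← exp_add]
        ring_nf

theorem uiGamma_mul_eq {α c l : ℝ} (hc : 0 < c) (hl : 0 ≤ l) :
    uiGamma α (c * l) = c ^ α * ∫ v in Ioi l, exp (-(c * v)) * v ^ (α - 1) := by
  rw [uiGamma, ← integral_comp_mul_left_Ioi' _ _ hc, smul_eq_mul, ← integral_const_mul,
    ← integral_const_mul]
  refine setIntegral_congr_fun measurableSet_Ioi fun v (hv : l < v) => ?_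
  rw [mul_rpow hc.le (by linarith),
    show c ^ α = c * c ^ (α - 1) by rw [mul_comm, ← rpow_add_one hc.ne', sub_add_cancel]]
  ring

theorem integral_exp_neg_mul_mul_add_rpow_neg {s c l : ℝ} (hc : 0 < c) (hl : 0 ≤ l) :
    ∫ u in Ioi 0, exp (-(c * u)) * (l + u) ^ (-s) =
      c ^ (s - 1) * exp (c * l) * uiGamma (1 - s) (c * l) := by
  have hshift := integral_comp_add_right_Ioi (fun v => exp (-(c * v)) * v ^ (1 - s - 1)) 0 l
  have hcc : c ^ (s - 1) * c ^ (1 - s) = 1 := by rw [← rpow_add hc]; simp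
  rw [zero_add] at hshift
  rw [uiGamma_mul_eq hc hl, ← hshift, mul_mul_mul_comm, hcc, one_mul, ← integral_const_mul]
  refine setIntegral_congr_fun measurableSet_Ioi fun u _ => ?_
  rw [sub_sub_cancel_left, ← mul_assoc, ← exp_add, add_comm u l]
  ring_nf

theorem integral_rpow_mul_exp_neg_mul_div_add {s l c : ℝ} (hs : 0 < s) (hl : 0 < l) (hc : 0 < c) :
    ∫ x in Ioi 0, x ^ (s - 1) * exp (-(l * x)) / (x + c) =
      Gamma s * (c ^ (s - 1) * exp (c * l) * uiGamma (1 - s) (c * l)) := by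
  rw [integral_div_add_eq_integral_exp_mul_laplace
      (integrableOn_rpow_mul_exp_neg_mul_Ioi hs hl) hc,
    ← integral_exp_neg_mul_mul_add_rpow_neg hc hl.le, ← integral_const_mul]
  refine setIntegral_congr_fun measurableSet_Ioi fun u (hu : 0 < u) => ?_
  have hlu : 0 < l + u := by linarith
  have hmerge : ∫ x in Ioi 0, x ^ (s - 1) * exp (-(l * x)) * exp (-(u * x)) =
      ∫ x in Ioi 0, x ^ (s - 1) * exp (-((l + u) * x)) := by
    congr 1 with x
    rw [mul_assoc, ← exp_add]
    ring_nf
  rw [hmerge, integral_rpow_mul_exp_neg_mul_Ioi hs hlu, one_div, inv_rpow hlu.le,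
    ← rpow_neg hlu.le]
  ring

theorem gDens_eq (a b x : ℝ) :
    gDens a b x =
      (-b / 2) ^ (a / 2) / Gamma (a / 2) * (x ^ (a / 2 - 1) * exp (-(-b / 2 * x))) := by
  rw [gDens, show b * x / 2 = -(-b / 2 * x) by ring]
  ring

theorem integrableOn_gDens {a b : ℝ} (ha : 0 < a) (hb : b < 0) :
    IntegrableOn (gDens a b) (Ioi 0) :=
  IntegrableOn.congr_fun
    ((integrableOn_rpow_mul_exp_neg_mul_Ioi (by linarith) (by linarith)).const_mul _)
    (fun x _ => (gDens_eq a b x).symm) measurableSet_Ioi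

theorem integral_gDens {a b : ℝ} (ha : 0 < a) (hb : b < 0) : ∫ x in Ioi 0, gDens a b x = 1 := by
  have hl : 0 < -b / 2 := by linarith
  simp_rw [gDens_eq]
  rw [integral_const_mul, integral_rpow_mul_exp_neg_mul_Ioi (by linarith) hl, one_div,
    inv_rpow hl.le, mul_comm _⁻¹, ← mul_assoc,
    div_mul_cancel₀ _ (Gamma_pos_of_pos (by linarith)).ne',
    mul_inv_cancel₀ (rpow_pos_of_pos hl _).ne']

theorem mul_integral_gDens_div_add {a b c : ℝ} (ha : 0 < a) (hb : b < 0) (hc : 0 < c) :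
    c * ∫ x in Ioi 0, gDens a b x / (x + c) = psi a b c := by
  have hl : 0 < -b / 2 := by linarith
  have hdiv : ∀ x, gDens a b x / (x + c) = (-b / 2) ^ (a / 2) / Gamma (a / 2) *
      (x ^ (a / 2 - 1) * exp (-(-b / 2 * x)) / (x + c)) := fun x => by
    rw [gDens_eq, mul_div_assoc]
  simp_rw [hdiv]
  rw [integral_const_mul, integral_rpow_mul_exp_neg_mul_div_add (by linarith) hl hc, psi,
    show -(b * c) / 2 = c * (-b / 2) by ring, mul_rpow hc.le hl.le,
    show c ^ (a / 2) = c * c ^ (a / 2 - 1) by rw [rpow_sub_one hc.ne']; field_simp]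
  field_simp [(Gamma_pos_of_pos (by linarith : 0 < a / 2)).ne']

theorem expectation_X_div_shift (a b c : ℝ) (ha : 0 < a) (hb : b < 0) (hc : 0 < c) :
    (∫ x in Set.Ioi (0 : ℝ), x / (x + c) * gDens a b x) = 1 - psi a b c := by
  have hsplit : ∀ x ∈ Ioi (0 : ℝ),
      x / (x + c) * gDens a b x = gDens a b x - c * (gDens a b x / (x + c)) :=
    fun x (hx : 0 < x) => by field_simp; ring
  rw [setIntegral_congr_fun measurableSet_Ioi hsplit,
    integral_sub (integrableOn_gDens ha hb)
      ((integrableOn_div_add_const_Ioi (integrableOn_gDens ha hb) hc).const_mul c),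
    integral_const_mul, integral_gDens ha hb, mul_integral_gDens_div_add ha hb hc]
end

section
/- Let a > 0, b < 0, c > 0, and let X ~ Gamma(a/2, −b/2); set C = X + c. Then E[C] · E[1/C] − 1 = ψ_c (1 − a/(bc)) − 1, where ψ_c = (−bc/2)^{a/2} e^{−bc/2} Γ(1−a/2, −bc/2). Moreover this quantity is strictly positive. -/
/-!
With `α = a/2` and `r = -b/2`, `X` is Gamma distributed with shape `α` and rate `r`, so
`E[C] = α/r + c = c (1 - a/(bc))`. For the inverse moment write `1/C = ∫₀^∞ e^{-sC} ds`; by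
Fubini `E[1/C] = ∫₀^∞ e^{-cs} (r/(r+s))^α ds`, since the Laplace transform of the Gamma law is
`(r/(r+s))^α`, and the substitution `t = c(r+s)` turns this into `ψ_c / c`.

Strict positivity is the strict Cauchy–Schwarz inequality `E[C] E[1/C] > 1` for the non-constant
positive variable `C`, obtained from `0 < E[(C - t)²/C] = E[C] - 2t + t² E[1/C]` at `t = 1/E[1/C]`.
-/

open Real Set

open MeasureTheory ProbabilityTheory

theorem integral_pos_of_ae_nonneg_of_not_ae_eq_zero {Ω : Type*} [MeasurableSpace Ω]
    {μ : Measure Ω} {f : Ω → ℝ} (hf : 0 ≤ᵐ[μ] f) (hfi : Integrable f μ) (h0 : ¬ f =ᵐ[μ] 0) :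
    0 < ∫ ω, f ω ∂μ :=
  (integral_nonneg_of_ae hf).lt_of_ne fun h ↦
    h0 ((integral_eq_zero_iff_of_nonneg_ae hf hfi).1 h.symm)

theorem one_lt_integral_mul_integral_inv {Ω : Type*} [MeasurableSpace Ω] {μ : Measure Ω}
    [IsProbabilityMeasure μ] {Y : Ω → ℝ} (hpos : ∀ᵐ ω ∂μ, 0 < Y ω) (hY : Integrable Y μ)
    (hYinv : Integrable (fun ω ↦ (Y ω)⁻¹) μ) (hnc : ∀ t, ¬ Y =ᵐ[μ] fun _ ↦ t) :
    1 < (∫ ω, Y ω ∂μ) * ∫ ω, (Y ω)⁻¹ ∂μ := by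
  set I := ∫ ω, (Y ω)⁻¹ ∂μ
  have hI : 0 < I := by
    refine integral_pos_of_ae_nonneg_of_not_ae_eq_zero (hpos.mono fun ω h ↦ (inv_pos.2 h).le)
      hYinv fun h0 ↦ ?_
    obtain ⟨ω, hω, hω0⟩ := (hpos.and h0).exists
    exact (inv_pos.2 hω).ne' hω0
  set t := I⁻¹
  have hexpand : (fun ω ↦ (Y ω - t) ^ 2 * (Y ω)⁻¹) =ᵐ[μ]
      fun ω ↦ Y ω - 2 * t + t ^ 2 * (Y ω)⁻¹ :=
    hpos.mono fun ω h ↦ by field_simp; ring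
  have hYt : Integrable (fun ω ↦ Y ω - 2 * t) μ := hY.sub (integrable_const _)
  have hsq : 0 < ∫ ω, (Y ω - t) ^ 2 * (Y ω)⁻¹ ∂μ := by
    refine integral_pos_of_ae_nonneg_of_not_ae_eq_zero (hpos.mono fun ω h ↦ by positivity)
      ((hYt.add (hYinv.const_mul _)).congr hexpand.symm) fun h0 ↦ hnc t ?_
    filter_upwards [hpos, h0] with ω hω hω0
    simpa [hω.ne', sub_eq_zero] using hω0
  rw [integral_congr_ae hexpand, integral_add hYt (hYinv.const_mul _), integral_sub hY
    (integrable_const _), integral_const_mul (t ^ 2), integral_const, probReal_univ, one_smul,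
    sq, mul_assoc, inv_mul_cancel₀ hI.ne', mul_one] at hsq
  calc 1 = t * I := (inv_mul_cancel₀ hI.ne').symm
    _ < (∫ ω, Y ω ∂μ) * I := by gcongr; linarith

theorem not_ae_eq_const_of_injective {α β : Type*} [MeasurableSpace α] {μ : Measure α}
    [NullSingletonClass μ] [NeZero μ] {f : α → β} (hf : Function.Injective f) (t : β) :
    ¬ f =ᵐ[μ] fun _ ↦ t := by
  intro h
  have hne : ∀ᵐ x ∂μ, f x ≠ t := measure_eq_zero_iff_ae_notMem.1
    (Set.Subsingleton.measure_zero (s := {x | f x = t})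
      (fun _ hx _ hy ↦ hf (hx.trans hy.symm)) μ)
  obtain ⟨x, hx, hx'⟩ := (h.and hne).exists
  exact hx' hx

theorem integral_inv_eq_integral_integral_exp {Ω : Type*} [MeasurableSpace Ω] {μ : Measure Ω}
    [SFinite μ] {Y : Ω → ℝ} (hYm : AEMeasurable Y μ) (hpos : ∀ᵐ ω ∂μ, 0 < Y ω)
    (hYinv : Integrable (fun ω ↦ (Y ω)⁻¹) μ) :
    ∫ ω, (Y ω)⁻¹ ∂μ = ∫ s in Ioi 0, ∫ ω, exp (-(s * Y ω)) ∂μ := by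
  have hexp : ∀ y : ℝ, 0 < y → IntegrableOn (fun s ↦ exp (-(s * y))) (Ioi 0) :=
    fun y hy ↦ (exp_neg_integrableOn_Ioi 0 hy).congr_fun (fun s _ ↦ by ring_nf) measurableSet_Ioi
  have hinv : ∀ y : ℝ, 0 < y → ∫ s in Ioi 0, exp (-(s * y)) = y⁻¹ := fun y hy ↦ by
    have h := integral_exp_mul_Ioi (neg_neg_of_pos hy) 0
    rw [mul_zero, exp_zero, neg_div_neg_eq, one_div] at h
    rw [← h]
    congr 1 with s
    ring_nf
  have hint : Integrable (Function.uncurry fun ω s ↦ exp (-(s * Y ω)))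
      (μ.prod (volume.restrict (Ioi 0))) := by
    refine (integrable_prod_iff ?_).2 ⟨hpos.mono fun ω h ↦ hexp _ h, hYinv.congr ?_⟩
    · exact (measurable_snd.aemeasurable.mul hYm.comp_fst).neg.exp.aestronglyMeasurable
    · filter_upwards [hpos] with ω h
      simp only [Function.uncurry_apply_pair, Real.norm_eq_abs, abs_exp, hinv _ h]
  calc ∫ ω, (Y ω)⁻¹ ∂μ = ∫ ω, (∫ s in Ioi 0, exp (-(s * Y ω))) ∂μ :=
        integral_congr_ae (hpos.mono fun ω h ↦ (hinv _ h).symm)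
    _ = _ := integral_integral_swap hint

theorem integral_Ioi_comp_mul_add (g : ℝ → ℝ) (b d : ℝ) {c : ℝ} (hc : 0 < c) :
    ∫ x in Ioi b, g (c * x + d) = c⁻¹ * ∫ x in Ioi (c * b + d), g x := by
  have hshift := (measurePreserving_add_right volume d).setIntegral_preimage_emb
    (measurableEmbedding_addRight d) g (Ioi (c * b + d))
  rw [preimage_add_const_Ioi, add_sub_cancel_right] at hshift
  rw [integral_comp_mul_left_Ioi (fun x ↦ g (x + d)) b hc, hshift, smul_eq_mul]

theorem mul_integral_exp_neg_mul_mul_div_rpow {a r c : ℝ} (hr : 0 ≤ r) (hc : 0 < c) :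
    c * ∫ s in Ioi 0, exp (-(c * s)) * (r / (r + s)) ^ a
      = (r * c) ^ a * exp (r * c) * uiGamma (1 - a) (r * c) := by
  -- the substitution `t = c * (r + s)`
  set G : ℝ → ℝ := fun t ↦ exp (-(t - r * c)) * (r * c / t) ^ a
  have hsubst : ∀ s ∈ Ioi (0 : ℝ),
      exp (-(c * s)) * (r / (r + s)) ^ a = G (c * s + r * c) := fun s _ ↦ by
    simp only [G, add_sub_cancel_right]
    rw [show c * s + r * c = (r + s) * c by ring, mul_div_mul_right _ _ hc.ne']
  have hG : ∀ t ∈ Ioi (r * c),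
      G t = (r * c) ^ a * exp (r * c) * (exp (-t) * t ^ (1 - a - 1)) := fun t ht ↦ by
    have ht0 : 0 ≤ t := (mul_nonneg hr hc.le).trans (le_of_lt ht)
    simp only [G]
    rw [div_rpow (mul_nonneg hr hc.le) ht0, sub_sub_cancel_left, rpow_neg ht0, neg_sub,
      sub_eq_add_neg, exp_add]
    ring
  rw [setIntegral_congr_fun measurableSet_Ioi hsubst, integral_Ioi_comp_mul_add G 0 (r * c) hc,
    mul_zero, zero_add, ← mul_assoc, mul_inv_cancel₀ hc.ne', one_mul,
    setIntegral_congr_fun measurableSet_Ioi hG, integral_const_mul, uiGamma]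

section GammaDistribution

variable {a r : ℝ}

instance : NullSingletonClass (gammaMeasure a r) := by
  unfold gammaMeasure
  infer_instance

theorem measurable_gammaPDF : Measurable (gammaPDF a r) :=
  (measurable_gammaPDFReal a r).ennreal_ofReal

theorem integral_gammaMeasure (ha : 0 < a) (hr : 0 < r) (f : ℝ → ℝ) :
    ∫ x, f x ∂gammaMeasure a r = ∫ x in Ioi 0, gammaPDFReal a r x * f x := by
  rw [gammaMeasure, integral_withDensity_eq_integral_toReal_smul measurable_gammaPDF
    (ae_of_all _ fun _ ↦ ENNReal.ofReal_lt_top), ← integral_Ici_eq_integral_Ioi,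
    setIntegral_eq_integral_of_forall_compl_eq_zero]
  · simp only [gammaPDF, ENNReal.toReal_ofReal (gammaPDFReal_nonneg ha hr _), smul_eq_mul]
  · intro x hx
    simp [gammaPDFReal, if_neg (show ¬ 0 ≤ x from hx)]

theorem integrable_gammaMeasure_iff (ha : 0 < a) (hr : 0 < r) {f : ℝ → ℝ} :
    Integrable f (gammaMeasure a r) ↔
      IntegrableOn (fun x ↦ gammaPDFReal a r x * f x) (Ioi 0) := by
  rw [gammaMeasure, integrable_withDensity_iff_integrable_smul' measurable_gammaPDF
    (ae_of_all _ fun _ ↦ ENNReal.ofReal_lt_top), ← integrableOn_Ici_iff_integrableOn_Ioi,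
    integrableOn_iff_integrable_of_support_subset]
  · simp only [gammaPDF, ENNReal.toReal_ofReal (gammaPDFReal_nonneg ha hr _), smul_eq_mul]
  · intro x hx
    by_contra h
    simp [gammaPDFReal, if_neg (show ¬ 0 ≤ x from h)] at hx

theorem ae_pos_gammaMeasure : ∀ᵐ x ∂gammaMeasure a r, 0 < x := by
  rw [gammaMeasure, ae_withDensity_iff measurable_gammaPDF]
  filter_upwards [Measure.ae_ne volume 0] with x hx0 hpdf
  by_contra h
  exact hpdf (gammaPDF_of_neg ((not_lt.1 h).lt_of_ne hx0))

theorem integrableOn_gammaPDFReal (ha : 0 < a) (hr : 0 < r) :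
    IntegrableOn (gammaPDFReal a r) (Ioi 0) := by
  have := isProbabilityMeasure_gammaMeasure ha hr
  simpa using (integrable_gammaMeasure_iff ha hr).1 (integrable_const (1 : ℝ))

theorem setIntegral_gammaPDFReal (ha : 0 < a) (hr : 0 < r) :
    ∫ x in Ioi 0, gammaPDFReal a r x = 1 := by
  have := isProbabilityMeasure_gammaMeasure ha hr
  simpa using (integral_gammaMeasure ha hr fun _ ↦ 1).symm

theorem id_mul_gammaPDFReal (ha : 0 < a) (hr : 0 < r) (x : ℝ) :
    x * gammaPDFReal a r x = a / r * gammaPDFReal (a + 1) r x := by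
  unfold gammaPDFReal
  split_ifs with hx
  · have hxa : x ^ a = x ^ (a - 1) * x := by
      simpa using rpow_add_one' hx (show a - 1 + 1 ≠ 0 by linarith)
    rw [add_sub_cancel_right, Gamma_add_one ha.ne', rpow_add_one hr.ne', hxa]
    field_simp
  · simp

theorem gammaPDFReal_mul_exp_neg_mul {s : ℝ} (hr : 0 ≤ r) (hrs : 0 < r + s) (x : ℝ) :
    gammaPDFReal a r x * exp (-(s * x)) = (r / (r + s)) ^ a * gammaPDFReal a (r + s) x := by
  unfold gammaPDFReal
  split_ifs
  · rw [div_rpow hr hrs.le, mul_assoc, ← exp_add,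
      show -(r * x) + -(s * x) = -((r + s) * x) by ring]
    field_simp
  · simp

theorem integrable_id_gammaMeasure (ha : 0 < a) (hr : 0 < r) :
    Integrable (fun x ↦ x) (gammaMeasure a r) :=
  (integrable_gammaMeasure_iff ha hr).2 <| IntegrableOn.congr_fun
    ((integrableOn_gammaPDFReal (a := a + 1) (by linarith) hr).const_mul (a / r))
    (fun x _ ↦ by rw [mul_comm (gammaPDFReal a r x), id_mul_gammaPDFReal ha hr, mul_comm])
    measurableSet_Ioi

theorem integral_id_gammaMeasure (ha : 0 < a) (hr : 0 < r) :
    ∫ x, x ∂gammaMeasure a r = a / r := by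
  simp_rw [integral_gammaMeasure ha hr, mul_comm (gammaPDFReal a r _), id_mul_gammaPDFReal ha hr]
  rw [integral_const_mul, setIntegral_gammaPDFReal (by linarith) hr, mul_one]

theorem integral_exp_neg_mul_gammaMeasure (ha : 0 < a) (hr : 0 < r) {s : ℝ} (hs : -r < s) :
    ∫ x, exp (-(s * x)) ∂gammaMeasure a r = (r / (r + s)) ^ a := by
  have hrs : 0 < r + s := by linarith
  simp_rw [integral_gammaMeasure ha hr, gammaPDFReal_mul_exp_neg_mul hr.le hrs]
  rw [integral_const_mul, setIntegral_gammaPDFReal ha hrs, mul_one]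

theorem integrable_inv_add_gammaMeasure (ha : 0 < a) (hr : 0 < r) {c : ℝ} (hc : 0 < c) :
    Integrable (fun x ↦ (x + c)⁻¹) (gammaMeasure a r) := by
  have := isProbabilityMeasure_gammaMeasure ha hr
  refine Integrable.of_bound (by fun_prop) c⁻¹ ?_
  filter_upwards [ae_pos_gammaMeasure] with x hx
  rw [norm_inv, Real.norm_of_nonneg (by linarith)]
  exact inv_anti₀ hc (by linarith)

theorem mul_integral_inv_add_gammaMeasure (ha : 0 < a) (hr : 0 < r) {c : ℝ} (hc : 0 < c) :
    c * ∫ x, (x + c)⁻¹ ∂gammaMeasure a r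
      = (r * c) ^ a * exp (r * c) * uiGamma (1 - a) (r * c) := by
  have := isProbabilityMeasure_gammaMeasure ha hr
  have hpos : ∀ᵐ x ∂gammaMeasure a r, 0 < x + c :=
    ae_pos_gammaMeasure.mono fun x hx ↦ by linarith
  have hlaplace : ∀ s ∈ Ioi (0 : ℝ), ∫ x, exp (-(s * (x + c))) ∂gammaMeasure a r
      = exp (-(c * s)) * (r / (r + s)) ^ a := fun s hs ↦ by
    simp_rw [show ∀ x, -(s * (x + c)) = -(c * s) + -(s * x) from fun x ↦ by ring, exp_add]
    rw [integral_const_mul, integral_exp_neg_mul_gammaMeasure ha hr (by linarith [mem_Ioi.1 hs])]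
  rw [integral_inv_eq_integral_integral_exp (by fun_prop) hpos
    (integrable_inv_add_gammaMeasure ha hr hc), setIntegral_congr_fun measurableSet_Ioi hlaplace,
    mul_integral_exp_neg_mul_mul_div_rpow hr.le hc]

end GammaDistribution

theorem gDens_eq_gammaPDFReal {a b x : ℝ} (hx : 0 ≤ x) :
    gDens a b x = gammaPDFReal (a / 2) (-b / 2) x := by
  simp only [gDens, gammaPDFReal, if_pos hx]
  ring_nf

theorem setIntegral_mul_gDens {a b : ℝ} (ha : 0 < a) (hb : b < 0) (f : ℝ → ℝ) :
    ∫ x in Ioi 0, f x * gDens a b x = ∫ x, f x ∂gammaMeasure (a / 2) (-b / 2) := by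
  rw [integral_gammaMeasure (by positivity) (by linarith)]
  refine setIntegral_congr_fun measurableSet_Ioi fun x hx ↦ ?_
  rw [mul_comm, gDens_eq_gammaPDFReal (le_of_lt hx)]

theorem expectation_C_mul_inv_C (a b c : ℝ) (ha : 0 < a) (hb : b < 0) (hc : 0 < c) :
    (∫ x in Set.Ioi (0 : ℝ), (x + c) * gDens a b x) *
        (∫ x in Set.Ioi (0 : ℝ), (x + c)⁻¹ * gDens a b x) - 1
      = psi a b c * (1 - a / (b * c)) - 1 ∧
    0 < psi a b c * (1 - a / (b * c)) - 1 := by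
  have hα : 0 < a / 2 := by positivity
  have hr : 0 < -b / 2 := by linarith
  rw [setIntegral_mul_gDens ha hb, setIntegral_mul_gDens ha hb (fun x ↦ (x + c)⁻¹)]
  have := isProbabilityMeasure_gammaMeasure hα hr
  have hX := integrable_id_gammaMeasure hα hr
  set μ := gammaMeasure (a / 2) (-b / 2)
  have hmean : ∫ x, x + c ∂μ = c * (1 - a / (b * c)) := by
    rw [integral_add hX (integrable_const c), integral_id_gammaMeasure hα hr, integral_const,
      probReal_univ, one_smul]
    field_simp
    ring
  have hpsi : psi a b c = c * ∫ x, (x + c)⁻¹ ∂μ := by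
    rw [mul_integral_inv_add_gammaMeasure hα hr hc, psi]
    ring_nf
  have hkey : (∫ x, x + c ∂μ) * ∫ x, (x + c)⁻¹ ∂μ = psi a b c * (1 - a / (b * c)) := by
    rw [hmean, hpsi]
    ring
  have hprod : 1 < (∫ x, x + c ∂μ) * ∫ x, (x + c)⁻¹ ∂μ :=
    one_lt_integral_mul_integral_inv (ae_pos_gammaMeasure.mono fun x hx ↦ by linarith)
      (hX.add (integrable_const c)) (integrable_inv_add_gammaMeasure hα hr hc)
      (not_ae_eq_const_of_injective (add_left_injective c))
  rw [hkey] at hprod ⊢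
  exact ⟨rfl, sub_pos.2 hprod⟩
end

section
/- Let a > 0, b < 0, c > 0, and let X ~ Gamma(a/2, −b/2). Then E[X/(X+c)²] = (a/2)·E[1/(X+c)] + (b/2)·E[X/(X+c)]. -/
open Real Set

/-!
Integration by parts against the unnormalised Gamma kernel `k x = x ^ (s - 1) * exp (-r * x)`:
the function `-(x + c)⁻¹ * x ^ s * exp (-r * x)` vanishes at `0` and at `∞`, and its derivative is
`x / (x + c) ^ 2 * k x - s * (x + c)⁻¹ * k x + r * x / (x + c) * k x`, which therefore integrates
to zero over `(0, ∞)`. The density `gDens a b` is a constant multiple of `k` with `s = a / 2`,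
`r = -b / 2`.
The multipliers `x / (x + c) ^ 2`, `(x + c)⁻¹` and `x / (x + c)` are bounded on `(0, ∞)`, which
makes every integral involved finite.
-/

open MeasureTheory Filter Topology

noncomputable def gammaKernel (s r x : ℝ) : ℝ := x ^ (s - 1) * exp (-r * x)

section GammaKernel

variable {s r c : ℝ}

theorem integrableOn_gammaKernel (hs : 0 < s) (hr : 0 < r) :
    IntegrableOn (gammaKernel s r) (Ioi 0) := by
  have h := integrableOn_rpow_mul_exp_neg_mul_rpow (s := s - 1) (by linarith) one_pos hr
  simp only [rpow_one] at h
  exact h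

theorem integrableOn_mul_gammaKernel {q : ℝ → ℝ} (C : ℝ) (hs : 0 < s) (hr : 0 < r)
    (hq : Measurable q) (hqC : ∀ x ∈ Ioi (0 : ℝ), |q x| ≤ C) :
    IntegrableOn (fun x => q x * gammaKernel s r x) (Ioi 0) :=
  (integrableOn_gammaKernel hs hr).bdd_mul hq.aestronglyMeasurable
    ((ae_restrict_iff' measurableSet_Ioi).2 (ae_of_all _ hqC))

theorem hasDerivAt_neg_inv_add_mul_rpow_mul_exp {x : ℝ} (hx : 0 < x) (hxc : x + c ≠ 0) :
    HasDerivAt (fun y => -(y + c)⁻¹ * (y ^ s * exp (-r * y)))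
      (x / (x + c) ^ 2 * gammaKernel s r x
        - (s * ((x + c)⁻¹ * gammaKernel s r x) - r * (x / (x + c) * gammaKernel s r x))) x := by
  have hinv : HasDerivAt (fun y => -(y + c)⁻¹) (-(-1 / (x + c) ^ 2)) x :=
    (((hasDerivAt_id x).add_const c).inv hxc).neg
  have hpow : HasDerivAt (fun y => y ^ s) (s * x ^ (s - 1)) x :=
    hasDerivAt_rpow_const (Or.inl hx.ne')
  have hexp : HasDerivAt (fun y => exp (-r * y)) (exp (-r * x) * -r) x := by
    simpa using ((hasDerivAt_id x).const_mul (-r)).exp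
  have hprod : HasDerivAt (fun y => y ^ s * exp (-r * y))
      (s * x ^ (s - 1) * exp (-r * x) + x ^ s * (exp (-r * x) * -r)) x :=
    hpow.mul hexp
  refine (hinv.mul hprod).congr_deriv ?_
  rw [show x ^ s = x ^ (s - 1) * x by rw [← rpow_add_one hx.ne', sub_add_cancel], gammaKernel]
  field_simp
  ring

theorem tendsto_neg_inv_add_mul_rpow_mul_exp_atTop (hr : 0 < r) :
    Tendsto (fun x => -(x + c)⁻¹ * (x ^ s * exp (-r * x))) atTop (𝓝 0) := by
  have hinv : Tendsto (fun x : ℝ => -(x + c)⁻¹) atTop (𝓝 0) := by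
    simpa using (tendsto_inv_atTop_zero.comp (tendsto_atTop_add_const_right _ c tendsto_id)).neg
  simpa using hinv.mul (tendsto_rpow_mul_exp_neg_mul_atTop_nhds_zero s r hr)

theorem integral_div_add_sq_mul_gammaKernel (hs : 0 < s) (hr : 0 < r) (hc : 0 < c) :
    ∫ x in Ioi 0, x / (x + c) ^ 2 * gammaKernel s r x
      = s * (∫ x in Ioi 0, (x + c)⁻¹ * gammaKernel s r x)
        - r * ∫ x in Ioi 0, x / (x + c) * gammaKernel s r x := by
  have hI₁ : IntegrableOn (fun x => x / (x + c) ^ 2 * gammaKernel s r x) (Ioi 0) := by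
    refine integrableOn_mul_gammaKernel c⁻¹ hs hr (by fun_prop) fun x (hx : 0 < x) => ?_
    rw [abs_of_nonneg (by positivity), div_le_iff₀ (by positivity), inv_mul_eq_div,
      le_div_iff₀ hc]
    nlinarith [mul_pos hx hc]
  have hI₂ : IntegrableOn (fun x => (x + c)⁻¹ * gammaKernel s r x) (Ioi 0) := by
    refine integrableOn_mul_gammaKernel c⁻¹ hs hr (by fun_prop) fun x (hx : 0 < x) => ?_
    rw [abs_of_nonneg (by positivity)]
    gcongr
    linarith
  have hI₃ : IntegrableOn (fun x => x / (x + c) * gammaKernel s r x) (Ioi 0) := by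
    refine integrableOn_mul_gammaKernel 1 hs hr (by fun_prop) fun x (hx : 0 < x) => ?_
    rw [abs_of_nonneg (by positivity), div_le_one (by positivity)]
    linarith
  have hI₂₃ : IntegrableOn
      (fun x => s * ((x + c)⁻¹ * gammaKernel s r x) - r * (x / (x + c) * gammaKernel s r x))
      (Ioi 0) :=
    (hI₂.const_mul s).sub (hI₃.const_mul r)
  have hcont : ContinuousWithinAt (fun x => -(x + c)⁻¹ * (x ^ s * exp (-r * x))) (Ici 0) 0 := by
    have hpow : ContinuousAt (fun x : ℝ => x ^ s) 0 := continuousAt_rpow_const 0 s (Or.inr hs.le)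
    exact ContinuousAt.continuousWithinAt (by fun_prop (disch := positivity))
  have hFTC := integral_Ioi_of_hasDerivAt_of_tendsto hcont
    (fun x (hx : 0 < x) => hasDerivAt_neg_inv_add_mul_rpow_mul_exp hx (by positivity))
    (hI₁.sub hI₂₃)
    (tendsto_neg_inv_add_mul_rpow_mul_exp_atTop hr)
  have hsplit : ∫ x in Ioi 0, (x / (x + c) ^ 2 * gammaKernel s r x
        - (s * ((x + c)⁻¹ * gammaKernel s r x) - r * (x / (x + c) * gammaKernel s r x)))
      = (∫ x in Ioi 0, x / (x + c) ^ 2 * gammaKernel s r x)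
        - (s * (∫ x in Ioi 0, (x + c)⁻¹ * gammaKernel s r x)
          - r * ∫ x in Ioi 0, x / (x + c) * gammaKernel s r x) := by
    rw [integral_sub hI₁ hI₂₃, integral_sub (hI₂.const_mul s) (hI₃.const_mul r),
      integral_const_mul, integral_const_mul]
  simp only [zero_rpow hs.ne', zero_mul, mul_zero, sub_zero] at hFTC
  linarith

end GammaKernel

theorem gDens_eq_mul_gammaKernel (a b x : ℝ) :
    gDens a b x = (Gamma (a / 2))⁻¹ * (-b / 2) ^ (a / 2) * gammaKernel (a / 2) (-b / 2) x := by
  rw [gDens, gammaKernel, show -(-b / 2) * x = b * x / 2 by ring]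
  ring

theorem expectation_X_div_shift_sq_recurrence (a b c : ℝ)
    (ha : 0 < a) (hb : b < 0) (hc : 0 < c) :
    (∫ x in Set.Ioi (0 : ℝ), x / (x + c) ^ 2 * gDens a b x)
      = a / 2 * (∫ x in Set.Ioi (0 : ℝ), (x + c)⁻¹ * gDens a b x)
        + b / 2 * (∫ x in Set.Ioi (0 : ℝ), x / (x + c) * gDens a b x) := by
  have hpull (q : ℝ → ℝ) : ∫ x in Ioi (0 : ℝ), q x * gDens a b x
      = (Gamma (a / 2))⁻¹ * (-b / 2) ^ (a / 2)
        * ∫ x in Ioi (0 : ℝ), q x * gammaKernel (a / 2) (-b / 2) x := by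
    simp only [gDens_eq_mul_gammaKernel, mul_left_comm (q _), integral_const_mul]
  rw [hpull fun x => x / (x + c) ^ 2, hpull fun x => (x + c)⁻¹, hpull fun x => x / (x + c),
    integral_div_add_sq_mul_gammaKernel (by linarith) (by linarith) hc]
  ring
end

section
/- Let a > 0, b < 0, c > 0, and let X ~ Gamma(a/2, −b/2). Then E[X²/(X+c)²] = ((a+2)/2)·E[X/(X+c)] + (b/2)·E[X²/(X+c)]. -/
open Real Set

/-!
Write the Gamma density as `x ^ (α - 1) e^{-r x}` up to its normalising constant, with `α = a/2`,
`r = -b/2`. Integrating by parts against `G x = x ^ (α + 1) e^{-r x} / (x + c)`, which vanishes at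
`0` and at `∞`, gives `0 = ∫ G' = (α + 1) E[X/(X+c)] - r E[X²/(X+c)] - E[X²/(X+c)²]`.
-/

open MeasureTheory Filter Topology

lemma integrableOn_rpow_mul_exp_neg_mul_div_pow {r c s : ℝ} (hr : 0 < r) (hc : 0 < c)
    (hs : -1 < s) (n : ℕ) :
    IntegrableOn (fun x : ℝ => x ^ s * exp (-r * x) / (x + c) ^ n) (Ioi 0) := by
  have hbase : IntegrableOn (fun x : ℝ => x ^ s * exp (-r * x)) (Ioi 0) := by
    simpa only [rpow_one] using integrableOn_rpow_mul_exp_neg_mul_rpow hs one_pos hr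
  have hbdd : ∀ᵐ x ∂volume.restrict (Ioi 0), ‖((x + c) ^ n)⁻¹‖ ≤ (c ^ n)⁻¹ := by
    refine (ae_restrict_iff' measurableSet_Ioi).2 (ae_of_all _ fun x (hx : 0 < x) => ?_)
    rw [norm_inv, norm_pow, Real.norm_of_nonneg (by linarith)]
    gcongr
    linarith
  exact IntegrableOn.congr_fun
    (Integrable.mul_bdd hbase (by fun_prop : Measurable _).aestronglyMeasurable hbdd)
    (fun x _ => (div_eq_mul_inv _ _).symm) measurableSet_Ioi

lemma tendsto_rpow_mul_exp_neg_mul_div_add_atTop (s : ℝ) {r : ℝ} (hr : 0 < r) (c : ℝ) :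
    Tendsto (fun x : ℝ => x ^ s * exp (-r * x) / (x + c)) atTop (𝓝 0) :=
  (tendsto_rpow_mul_exp_neg_mul_atTop_nhds_zero s r hr).div_atTop
    (tendsto_atTop_add_const_right _ c tendsto_id)

lemma hasDerivAt_rpow_mul_exp_neg_mul_div_add {α r c x : ℝ} (hx : 0 < x) (hxc : x + c ≠ 0) :
    HasDerivAt (fun y : ℝ => y ^ (α + 1) * exp (-r * y) / (y + c))
      ((α + 1) * (x ^ α * exp (-r * x) / (x + c)) - r * (x ^ (α + 1) * exp (-r * x) / (x + c))
        - x ^ (α + 1) * exp (-r * x) / (x + c) ^ 2) x := by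
  have hpow : HasDerivAt (fun y : ℝ => y ^ (α + 1)) ((α + 1) * x ^ α) x := by
    simpa using hasDerivAt_rpow_const (x := x) (p := α + 1) (Or.inl hx.ne')
  have hexp : HasDerivAt (fun y : ℝ => exp (-r * y)) (exp (-r * x) * -r) x := by
    simpa using ((hasDerivAt_id x).const_mul (-r)).exp
  refine ((hpow.mul hexp).div ((hasDerivAt_id' x).add_const c) hxc).congr_deriv ?_
  simp only [Pi.mul_apply]
  field_simp
  ring

lemma integral_rpow_mul_exp_neg_mul_div_add_sq {α r c : ℝ} (hα : -1 < α) (hr : 0 < r)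
    (hc : 0 < c) :
    ∫ x in Ioi (0 : ℝ), x ^ (α + 1) * exp (-r * x) / (x + c) ^ 2
      = (α + 1) * (∫ x in Ioi (0 : ℝ), x ^ α * exp (-r * x) / (x + c))
        - r * ∫ x in Ioi (0 : ℝ), x ^ (α + 1) * exp (-r * x) / (x + c) := by
  have hI₀ := integrableOn_rpow_mul_exp_neg_mul_div_pow hr hc hα 1
  have hI₁ := integrableOn_rpow_mul_exp_neg_mul_div_pow hr hc (s := α + 1) (by linarith) 1
  have hI₂ := integrableOn_rpow_mul_exp_neg_mul_div_pow hr hc (s := α + 1) (by linarith) 2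
  simp only [pow_one] at hI₀ hI₁
  have hcont : ContinuousWithinAt (fun y : ℝ => y ^ (α + 1) * exp (-r * y) / (y + c)) (Ici 0) 0 :=
    ((continuousAt_rpow_const 0 (α + 1) (Or.inr (by linarith))).mul (by fun_prop)).div
      (by fun_prop) (by simpa using hc.ne') |>.continuousWithinAt
  have hparts := integral_Ioi_of_hasDerivAt_of_tendsto hcont
    (fun x (hx : 0 < x) => hasDerivAt_rpow_mul_exp_neg_mul_div_add hx (by linarith))
    (((hI₀.const_mul _).sub (hI₁.const_mul _)).sub hI₂)
    (tendsto_rpow_mul_exp_neg_mul_div_add_atTop (α + 1) hr c)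
  rw [integral_sub ?_ hI₂, integral_sub ?_ ?_, integral_const_mul, integral_const_mul,
    zero_rpow (by linarith), zero_mul, zero_div, sub_zero] at hparts
  · linarith
  exacts [hI₀.const_mul _, hI₁.const_mul _, (hI₀.const_mul _).sub (hI₁.const_mul _)]

lemma setIntegral_pow_div_add_pow_mul_gDens (a b c : ℝ) (m n : ℕ) :
    ∫ x in Ioi (0 : ℝ), x ^ m / (x + c) ^ n * gDens a b x
      = (Gamma (a / 2))⁻¹ * (-b / 2) ^ (a / 2) *
        ∫ x in Ioi (0 : ℝ), x ^ (a / 2 - 1 + m) * exp (-(-b / 2) * x) / (x + c) ^ n := by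
  rw [← integral_const_mul]
  refine setIntegral_congr_fun measurableSet_Ioi fun x (hx : 0 < x) => ?_
  rw [gDens, rpow_add hx, rpow_natCast, show -(-b / 2) * x = b * x / 2 by ring]
  ring

theorem expectation_sq_div_shift_sq_recurrence (a b c : ℝ)
    (ha : 0 < a) (hb : b < 0) (hc : 0 < c) :
    (∫ x in Set.Ioi (0 : ℝ), x ^ 2 / (x + c) ^ 2 * gDens a b x)
      = (a + 2) / 2 * (∫ x in Set.Ioi (0 : ℝ), x / (x + c) * gDens a b x)
        + b / 2 * (∫ x in Set.Ioi (0 : ℝ), x ^ 2 / (x + c) * gDens a b x) := by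
  have hparts := integral_rpow_mul_exp_neg_mul_div_add_sq (α := a / 2) (r := -b / 2)
    (by linarith) (by linarith) hc
  have h₂₂ := setIntegral_pow_div_add_pow_mul_gDens a b c 2 2
  have h₁₁ := setIntegral_pow_div_add_pow_mul_gDens a b c 1 1
  have h₂₁ := setIntegral_pow_div_add_pow_mul_gDens a b c 2 1
  simp only [pow_one, Nat.cast_ofNat, Nat.cast_one, sub_add_cancel,
    show a / 2 - 1 + 2 = a / 2 + 1 by ring] at h₂₂ h₁₁ h₂₁
  rw [h₂₂, h₁₁, h₂₁, hparts]
  ring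
end
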